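/- Let β ∈ (β̄, μ_1). If β ≠ 0 then the matrix C(β) has exactly the two eigenvalues 3 and f(β) = 1 + 2/g(β) ≠ 3; the eigenspace ker(C(β) − 3·I_n) is the one-dimensional span of b_1(β), and the eigenspace ker(C(β) − f(β)·I_n) is the orthogonal complement of b_1(β), of dimension n − 1. If β = 0 then f(0) = 3 and C(0) = 3·I_n. -/

import Mathlib

/-!
Since `1/√((μ_i - β)(μ_j - β)) = γ_i γ_j`, we have `D(β) = I + β b bᵀ` with `b = b₁(β)`, so
`C(β) = f I + (2β/g) b bᵀ` is a rank-one perturbation of a scalar matrix: its eigenvalues are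
`f` on `b^⊥` and `f + (2β/g)‖b‖²` on `ℝ b`. As `‖b‖² = Σ 1/(μ_k - β)`, we get `g = 1 + β‖b‖²`,
and the second eigenvalue is `1 + 2(1 + β‖b‖²)/g = 3`.
-/

open Matrix Module

namespace Matrix

section RankOnePerturbation

variable {ι K : Type*} [Fintype ι] [DecidableEq ι] [Field K] (f c : K) (b : ι → K)

lemma smul_one_add_smul_vecMulVec_mulVec (v : ι → K) :
    (f • 1 + c • vecMulVec b b) *ᵥ v = f • v + (c * (b ⬝ᵥ v)) • b := by
  simp [add_mulVec, smul_mulVec, vecMulVec_mulVec, mul_smul]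

lemma mem_eigenspace_smul_one_add_smul_vecMulVec {lam : K} {v : ι → K} :
    v ∈ End.eigenspace (mulVecLin (f • 1 + c • vecMulVec b b)) lam ↔
      (c * (b ⬝ᵥ v)) • b = (lam - f) • v := by
  rw [End.mem_eigenspace_iff, mulVecLin_apply, smul_one_add_smul_vecMulVec_mulVec, sub_smul,
    eq_sub_iff_add_eq', eq_comm]

variable {f c b}

lemma eigenspace_smul_one_add_smul_vecMulVec_self (hc : c ≠ 0) (hb : b ≠ 0) :
    End.eigenspace (mulVecLin (f • 1 + c • vecMulVec b b)) f =
      LinearMap.ker (dotProductEquiv K ι b) := by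
  ext v
  rw [mem_eigenspace_smul_one_add_smul_vecMulVec, sub_self, zero_smul, LinearMap.mem_ker,
    dotProductEquiv_apply_apply]
  simp [hc, hb]

lemma eigenspace_smul_one_add_smul_vecMulVec_add (hc : c ≠ 0) (hbb : b ⬝ᵥ b ≠ 0) :
    End.eigenspace (mulVecLin (f • 1 + c • vecMulVec b b)) (f + c * (b ⬝ᵥ b)) = K ∙ b := by
  apply le_antisymm
  · intro v hv
    rw [mem_eigenspace_smul_one_add_smul_vecMulVec, add_sub_cancel_left] at hv
    refine Submodule.mem_span_singleton.mpr ⟨(b ⬝ᵥ v) / (b ⬝ᵥ b), ?_⟩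
    rw [← smul_right_inj (mul_ne_zero hc hbb), ← hv, smul_smul]
    congr 1
    field_simp
  · rw [Submodule.span_singleton_le_iff_mem, mem_eigenspace_smul_one_add_smul_vecMulVec,
      add_sub_cancel_left]

lemma finrank_ker_dotProductEquiv (hb : b ≠ 0) :
    finrank K (LinearMap.ker (dotProductEquiv K ι b)) = Fintype.card ι - 1 := by
  have h := Dual.finrank_ker_add_one_of_ne_zero ((dotProductEquiv K ι).map_ne_zero_iff.mpr hb)
  rw [finrank_fintype_fun_eq_card] at h
  omega

lemma hasEigenvalue_smul_one_add_smul_vecMulVec_iff (hι : 2 ≤ Fintype.card ι) (hc : c ≠ 0)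
    (hbb : b ⬝ᵥ b ≠ 0) {lam : K} :
    End.HasEigenvalue (mulVecLin (f • 1 + c • vecMulVec b b)) lam ↔
      lam = f + c * (b ⬝ᵥ b) ∨ lam = f := by
  have hb : b ≠ 0 := by rintro rfl; simp at hbb
  constructor
  · intro h
    obtain ⟨v, hv, hv0⟩ := h.exists_hasEigenvector
    rw [mem_eigenspace_smul_one_add_smul_vecMulVec] at hv
    by_cases hbv : b ⬝ᵥ v = 0
    · rw [hbv, mul_zero, zero_smul, eq_comm, smul_eq_zero, sub_eq_zero] at hv
      exact .inr (hv.resolve_right hv0)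
    · have hdot := congrArg (b ⬝ᵥ ·) hv
      simp only [dotProduct_smul, smul_eq_mul] at hdot
      left
      have : (lam - f - c * (b ⬝ᵥ b)) * (b ⬝ᵥ v) = 0 := by
        linear_combination -hdot
      linear_combination (mul_eq_zero.mp this).resolve_right hbv
  · rintro (rfl | rfl)
    · rw [End.hasEigenvalue_iff, eigenspace_smul_one_add_smul_vecMulVec_add hc hbb, Ne,
        Submodule.span_singleton_eq_bot]
      exact hb
    · rw [End.hasEigenvalue_iff, eigenspace_smul_one_add_smul_vecMulVec_self hc hb]
      intro h
      have := finrank_ker_dotProductEquiv (K := K) hb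
      rw [h, finrank_bot] at this
      omega

end RankOnePerturbation

end Matrix

section SecularFunction

variable {ι : Type*} {μ : ι → ℝ} {β : ℝ}

lemma mul_sum_one_div_sub_lt [Fintype ι] [Nonempty ι] (hμ : ∀ k, 0 < μ k) {x : ℝ} (hxβ : x < β)
    (hβ : ∀ k, β < μ k) : x * ∑ k, 1 / (μ k - x) < β * ∑ k, 1 / (μ k - β) := by
  simp_rw [Finset.mul_sum, mul_one_div]
  refine Finset.sum_lt_sum_of_nonempty Finset.univ_nonempty fun k _ => ?_
  rw [div_lt_div_iff₀ (by linarith [hβ k]) (by linarith [hβ k])]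
  nlinarith [mul_pos (sub_pos.mpr hxβ) (hμ k)]

lemma dotProduct_self_eq_sum_one_div_sub [Fintype ι] (hβ : ∀ k, β < μ k) {b : ι → ℝ}
    (hb : ∀ j, b j = (√(μ j - β))⁻¹) : b ⬝ᵥ b = ∑ k, 1 / (μ k - β) := by
  refine Finset.sum_congr rfl fun k _ => ?_
  rw [hb, ← mul_inv, Real.mul_self_sqrt (sub_nonneg.mpr (hβ k).le), one_div]

lemma eq_one_add_smul_vecMulVec_of_entries [DecidableEq ι] (hβ : ∀ k, β < μ k)
    {D : Matrix ι ι ℝ}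
    (hD : ∀ i j, D i j =
      if i = j then μ i / (μ i - β) else β / √((μ i - β) * (μ j - β)))
    {b : ι → ℝ} (hb : ∀ j, b j = (√(μ j - β))⁻¹) : D = 1 + β • vecMulVec b b := by
  ext i j
  have hi : 0 < μ i - β := sub_pos.mpr (hβ i)
  rw [hD, Matrix.add_apply, Matrix.smul_apply, vecMulVec_apply, hb, hb, smul_eq_mul]
  split_ifs with h
  · subst h
    rw [one_apply_eq, ← mul_inv, Real.mul_self_sqrt hi.le]
    field_simp
    ring
  · rw [one_apply_ne h, Real.sqrt_mul hi.le, ← mul_inv, zero_add, div_eq_mul_inv]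

end SecularFunction

/-- Let `β ∈ (β̄, μ 0)`. If `β ≠ 0` then the matrix `C(β) = I + (2/g(β)) D(β)`
has exactly the two eigenvalues `3` and `f(β) = 1 + 2/g(β) ≠ 3`; the
eigenspace for `3` is the one-dimensional span of `b₁(β)`, and the eigenspace
for `f(β)` is the orthogonal complement of `b₁(β)`, of dimension `n - 1`.
If `β = 0` then `f(0) = 3` and `C(0) = 3 I`. -/
theorem stmt_10 (n : ℕ) (hn : 2 ≤ n) (μ : Fin n → ℝ) (hμpos : ∀ k, 0 < μ k)
    (hμmono : Monotone μ) (g : ℝ → ℝ)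
    (hg : ∀ β : ℝ, g β = 1 + β * ∑ k, 1 / (μ k - β))
    (βbar : ℝ) (hβbarzero : g βbar = 0)
    (β : ℝ) (hβ : β ∈ Set.Ioo βbar (μ ⟨0, by omega⟩))
    (D : Matrix (Fin n) (Fin n) ℝ)
    (hD : ∀ i j, D i j =
      if i = j then μ i / (μ i - β) else β / Real.sqrt ((μ i - β) * (μ j - β)))
    (C : Matrix (Fin n) (Fin n) ℝ) (hC : C = 1 + (2 / g β) • D)
    (f : ℝ) (hf : f = 1 + 2 / g β)
    (b1 : Fin n → ℝ) (hb1 : ∀ j, b1 j = (Real.sqrt (μ j - β))⁻¹) :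
    (β ≠ 0 →
      f ≠ 3 ∧
      (∀ lam : ℝ, Module.End.HasEigenvalue (Matrix.mulVecLin C) lam ↔
        lam = 3 ∨ lam = f) ∧
      Module.End.eigenspace (Matrix.mulVecLin C) 3 = Submodule.span ℝ {b1} ∧
      Module.finrank ℝ (Module.End.eigenspace (Matrix.mulVecLin C) 3) = 1 ∧
      (Module.End.eigenspace (Matrix.mulVecLin C) f : Set (Fin n → ℝ)) =
        {v : Fin n → ℝ | ∑ k, v k * b1 k = 0} ∧
      Module.finrank ℝ (Module.End.eigenspace (Matrix.mulVecLin C) f) = n - 1) ∧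
    (β = 0 → f = 3 ∧ C = (3 : ℝ) • (1 : Matrix (Fin n) (Fin n) ℝ)) := by
  obtain ⟨hβbarβ, hβμ₀⟩ := hβ
  have : NeZero n := ⟨by omega⟩
  have hβμ : ∀ k, β < μ k := fun k => hβμ₀.trans_le (hμmono (Fin.zero_le k))
  have hgβ : g β = 1 + β * (b1 ⬝ᵥ b1) := by
    rw [hg, dotProduct_self_eq_sum_one_div_sub hβμ hb1]
  have hgpos : 0 < g β := by
    rw [hg] at hβbarzero ⊢
    linarith [mul_sum_one_div_sub_lt hμpos hβbarβ hβμ]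
  set c := 2 * β / g β
  have hCrankOne : C = f • 1 + c • vecMulVec b1 b1 := by
    rw [hC, eq_one_add_smul_vecMulVec_of_entries hβμ hD hb1, hf]
    module
  have hthree : f + c * (b1 ⬝ᵥ b1) = 3 := by
    rw [hf]
    simp only [c]
    field_simp
    linear_combination -2 * hgβ
  refine ⟨fun hβ0 => ?_, fun hβ0 => ?_⟩
  · have hc : c ≠ 0 := div_ne_zero (mul_ne_zero two_ne_zero hβ0) hgpos.ne'
    have hbb : b1 ⬝ᵥ b1 ≠ 0 := by
      rw [dotProduct_self_eq_sum_one_div_sub hβμ hb1]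
      exact (Finset.sum_pos (fun k _ => one_div_pos.mpr (sub_pos.mpr (hβμ k)))
        Finset.univ_nonempty).ne'
    have hb : b1 ≠ 0 := by rintro rfl; simp at hbb
    rw [hCrankOne, ← hthree]
    refine ⟨by simp [hc, hbb], fun lam => hasEigenvalue_smul_one_add_smul_vecMulVec_iff
      (by simpa using hn) hc hbb, eigenspace_smul_one_add_smul_vecMulVec_add hc hbb, ?_, ?_, ?_⟩
    · rw [eigenspace_smul_one_add_smul_vecMulVec_add hc hbb, finrank_span_singleton hb]
    · ext v
      rw [eigenspace_smul_one_add_smul_vecMulVec_self hc hb, SetLike.mem_coe, LinearMap.mem_ker,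
        dotProductEquiv_apply_apply, dotProduct_comm]
      rfl
    · rw [eigenspace_smul_one_add_smul_vecMulVec_self hc hb, finrank_ker_dotProductEquiv hb,
        Fintype.card_fin]
  · have hg1 : g β = 1 := by rw [hgβ, hβ0, zero_mul, add_zero]
    have hf3 : f = 3 := by rw [hf, hg1]; norm_num
    refine ⟨hf3, ?_⟩
    rw [hCrankOne, hf3]
    simp [c, hβ0]
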